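/- arXiv:2412.10659 — 2 statements merged into one kernel-verified Lean document; each statement's English description precedes it below -/
import Mathlib

section
/- Let X, Y, Z, W be random variables on a probability space taking values in finite measurable spaces. Suppose: (a) W = g ∘ Y for some measurable function g; (b) I[W : Y | ⟨X, Z⟩] > 0; (c) W is independent of the pair ⟨X, Z⟩; (d) H[W] > 0; and (e) I[Z : X] > 0. Then for every β > 0, the information-bottleneck objective strictly decreases when W is adjoined to Z: −M̂(⟨⟨X, Z⟩, W⟩; Y) + β · M̂(⟨Z, W⟩; X) < −M̂(⟨X, Z⟩; Y) + β · M̂(Z; X). (The strict improvement ℓ(z₃′, z₄) < ℓ(z₃, z₄) established in the proof of Proposition D.1, showing that the optimal bottleneck encoding must include all task-relevant information ž₃ missing from it.) -/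
open MeasureTheory ProbabilityTheory Classical

/-- The pair of two random variables: `⟨X, Y⟩ : ω ↦ (X ω, Y ω)`. -/
def pairRV {Ω S T : Type*} (X : Ω → S) (Y : Ω → T) : Ω → S × T :=
  fun ω => (X ω, Y ω)

/-- Shannon entropy `H[X]` of a random variable `X` taking values in a finite
measurable space, under the measure `μ`. -/
noncomputable def shannonEntropy {Ω S : Type*} [MeasurableSpace Ω] [MeasurableSpace S]
    [Fintype S] (μ : Measure Ω) (X : Ω → S) : ℝ :=
  ∑ s : S, Real.negMulLog ((μ (X ⁻¹' {s})).toReal)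

/-- Mutual information `I[X : Y] = H[X] + H[Y] - H[⟨X, Y⟩]`. -/
noncomputable def mutualInfo {Ω S T : Type*} [MeasurableSpace Ω] [MeasurableSpace S]
    [Fintype S] [MeasurableSpace T] [Fintype T] (μ : Measure Ω) (X : Ω → S) (Y : Ω → T) : ℝ :=
  shannonEntropy μ X + shannonEntropy μ Y - shannonEntropy μ (pairRV X Y)

/-- Conditional mutual information
`I[X : Y | Z] = H[⟨X, Z⟩] + H[⟨Y, Z⟩] - H[⟨⟨X, Y⟩, Z⟩] - H[Z]`. -/
noncomputable def condMutualInfo {Ω S T U : Type*} [MeasurableSpace Ω] [MeasurableSpace S]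
    [Fintype S] [MeasurableSpace T] [Fintype T] [MeasurableSpace U] [Fintype U]
    (μ : Measure Ω) (X : Ω → S) (Y : Ω → T) (Z : Ω → U) : ℝ :=
  shannonEntropy μ (pairRV X Z) + shannonEntropy μ (pairRV Y Z)
    - shannonEntropy μ (pairRV (pairRV X Y) Z) - shannonEntropy μ Z

/-- Relative mutual information `M̂(X; Y) := I[X : Y] / H[⟨X, Y⟩]`
(Definition D.1.2 of the paper). -/
noncomputable def relMutualInfo {Ω S T : Type*} [MeasurableSpace Ω] [MeasurableSpace S]
    [Fintype S] [MeasurableSpace T] [Fintype T] (μ : Measure Ω) (X : Ω → S) (Y : Ω → T) : ℝ :=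
  mutualInfo μ X Y / shannonEntropy μ (pairRV X Y)

section Aux

variable {Ω S S' T : Type*} [MeasurableSpace Ω]
    [MeasurableSpace S] [Fintype S] [MeasurableSingletonClass S]
    [MeasurableSpace S'] [Fintype S'] [MeasurableSingletonClass S']
    [MeasurableSpace T] [Fintype T] [MeasurableSingletonClass T]
    (μ : Measure Ω) [IsProbabilityMeasure μ]

lemma negMulLog_add_le {x y : ℝ} (hx : 0 ≤ x) (hy : 0 ≤ y) :
    Real.negMulLog (x + y) ≤ Real.negMulLog x + Real.negMulLog y := by
  have h1 : x * Real.log x ≤ x * Real.log (x + y) := by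
    rcases eq_or_lt_of_le hx with h | h
    · simp [← h]
    · exact mul_le_mul_of_nonneg_left (Real.log_le_log h (by linarith)) hx
  have h2 : y * Real.log y ≤ y * Real.log (x + y) := by
    rcases eq_or_lt_of_le hy with h | h
    · simp [← h]
    · exact mul_le_mul_of_nonneg_left (Real.log_le_log h (by linarith)) hy
  simp only [Real.negMulLog]
  nlinarith

lemma negMulLog_sum_le {ι : Type*} (A : Finset ι) (a : ι → ℝ) (ha : ∀ i ∈ A, 0 ≤ a i) :
    Real.negMulLog (∑ i ∈ A, a i) ≤ ∑ i ∈ A, Real.negMulLog (a i) := by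
  classical
  induction A using Finset.cons_induction with
  | empty => simp
  | cons i A hi ih =>
    rw [Finset.sum_cons, Finset.sum_cons]
    have h0 : 0 ≤ a i := ha i (Finset.mem_cons_self i A)
    have h1 : 0 ≤ ∑ j ∈ A, a j :=
      Finset.sum_nonneg fun j hj => ha j (Finset.mem_cons_of_mem hj)
    calc Real.negMulLog (a i + ∑ j ∈ A, a j)
        ≤ Real.negMulLog (a i) + Real.negMulLog (∑ j ∈ A, a j) := negMulLog_add_le h0 h1
      _ ≤ Real.negMulLog (a i) + ∑ j ∈ A, Real.negMulLog (a j) := by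
          have := ih (fun j hj => ha j (Finset.mem_cons_of_mem hj)); linarith

lemma sum_measure_preimage_toReal (X : Ω → S) (hX : Measurable X) :
    ∑ s : S, (μ (X ⁻¹' {s})).toReal = 1 := by
  rw [← ENNReal.toReal_sum (fun s _ => measure_ne_top μ _)]
  rw [MeasureTheory.sum_measure_preimage_singleton _
    (fun s _ => hX (measurableSet_singleton s))]
  simp

lemma measure_comp_preimage_toReal (X : Ω → S) (hX : Measurable X) (f : S → S') (s' : S') :
    (μ ((f ∘ X) ⁻¹' {s'})).toReal
      = ∑ s ∈ Finset.univ.filter (fun s => f s = s'), (μ (X ⁻¹' {s})).toReal := by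
  classical
  have hset : (f ∘ X) ⁻¹' {s'} = ⋃ s ∈ Finset.univ.filter (fun s => f s = s'), X ⁻¹' {s} := by
    ext ω
    simp only [Set.mem_preimage, Function.comp_apply, Set.mem_singleton_iff, Set.mem_iUnion,
      Finset.mem_filter, Finset.mem_univ, true_and]
    constructor
    · intro h; exact ⟨X ω, h, rfl⟩
    · rintro ⟨s, hs, hXs⟩; rw [hXs]; exact hs
  rw [hset, measure_biUnion_finset ?hd (fun s _ => hX (measurableSet_singleton s)),
    ENNReal.toReal_sum (fun s _ => measure_ne_top μ _)]
  case hd =>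
    intro s₁ _ s₂ _ hne
    exact Set.disjoint_left.mpr (fun ω h1 h2 => hne (h1.symm.trans h2))

lemma shannonEntropy_comp_le (X : Ω → S) (hX : Measurable X) (f : S → S') :
    shannonEntropy μ (f ∘ X) ≤ shannonEntropy μ X := by
  classical
  unfold shannonEntropy
  calc ∑ s' : S', Real.negMulLog ((μ ((f ∘ X) ⁻¹' {s'})).toReal)
      = ∑ s' : S', Real.negMulLog (∑ s ∈ Finset.univ.filter (fun s => f s = s'),
          (μ (X ⁻¹' {s})).toReal) := by
        simp_rw [measure_comp_preimage_toReal μ X hX f]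
    _ ≤ ∑ s' : S', ∑ s ∈ Finset.univ.filter (fun s => f s = s'),
          Real.negMulLog ((μ (X ⁻¹' {s})).toReal) :=
        Finset.sum_le_sum fun s' _ => negMulLog_sum_le _ _ (fun s _ => ENNReal.toReal_nonneg)
    _ = ∑ s : S, Real.negMulLog ((μ (X ⁻¹' {s})).toReal) :=
        Finset.sum_fiberwise _ _ _

lemma shannonEntropy_comp_of_injective (X : Ω → S) (f : S → S')
    (hf : Function.Injective f) :
    shannonEntropy μ (f ∘ X) = shannonEntropy μ X := by
  classical
  unfold shannonEntropy
  rw [← Finset.sum_subset (Finset.subset_univ (Finset.univ.image f))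
    (fun s' _ hs' => ?_)]
  · rw [Finset.sum_image (fun a _ b _ h => hf h)]
    refine Finset.sum_congr rfl fun s _ => ?_
    have : (f ∘ X) ⁻¹' {f s} = X ⁻¹' {s} := by
      ext ω; simp [hf.eq_iff]
    rw [this]
  · have : (f ∘ X) ⁻¹' {s'} = ∅ := by
      ext ω
      simp only [Set.mem_preimage, Function.comp_apply, Set.mem_singleton_iff,
        Set.mem_empty_iff_false, iff_false]
      intro h
      exact hs' (Finset.mem_image.mpr ⟨X ω, Finset.mem_univ _, h⟩)
    simp [this]

lemma shannonEntropy_pair_of_indep (A : Ω → S) (B : Ω → T)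
    (hA : Measurable A) (hB : Measurable B) (h : IndepFun A B μ) :
    shannonEntropy μ (pairRV A B) = shannonEntropy μ A + shannonEntropy μ B := by
  classical
  unfold shannonEntropy pairRV
  rw [Fintype.sum_prod_type]
  have hp : ∀ (a : S) (b : T), ((μ ((fun ω => (A ω, B ω)) ⁻¹' {(a, b)})).toReal)
      = (μ (A ⁻¹' {a})).toReal * (μ (B ⁻¹' {b})).toReal := by
    intro a b
    have hset : (fun ω => (A ω, B ω)) ⁻¹' {(a, b)} = A ⁻¹' {a} ∩ B ⁻¹' {b} := by
      ext ω; simp [Prod.ext_iff]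
    rw [hset, h.measure_inter_preimage_eq_mul _ _ (measurableSet_singleton a)
      (measurableSet_singleton b), ENNReal.toReal_mul]
  simp_rw [hp, Real.negMulLog_mul]
  rw [Finset.sum_congr rfl (fun a _ => Finset.sum_add_distrib)]
  rw [Finset.sum_add_distrib]
  congr 1
  · calc ∑ a : S, ∑ b : T, (μ (B ⁻¹' {b})).toReal * Real.negMulLog ((μ (A ⁻¹' {a})).toReal)
        = ∑ a : S, (∑ b : T, (μ (B ⁻¹' {b})).toReal) * Real.negMulLog ((μ (A ⁻¹' {a})).toReal) := by
          simp_rw [Finset.sum_mul]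
      _ = ∑ a : S, Real.negMulLog ((μ (A ⁻¹' {a})).toReal) := by
          simp_rw [sum_measure_preimage_toReal μ B hB, one_mul]
  · calc ∑ a : S, ∑ b : T, (μ (A ⁻¹' {a})).toReal * Real.negMulLog ((μ (B ⁻¹' {b})).toReal)
        = ∑ a : S, (μ (A ⁻¹' {a})).toReal * ∑ b : T, Real.negMulLog ((μ (B ⁻¹' {b})).toReal) := by
          simp_rw [Finset.mul_sum]
      _ = (∑ a : S, (μ (A ⁻¹' {a})).toReal) * ∑ b : T, Real.negMulLog ((μ (B ⁻¹' {b})).toReal) := by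
          rw [Finset.sum_mul]
      _ = ∑ b : T, Real.negMulLog ((μ (B ⁻¹' {b})).toReal) := by
          rw [sum_measure_preimage_toReal μ A hA, one_mul]

end Aux

/-- Under hypotheses (a)–(e), for every `β > 0` the information-bottleneck
objective strictly decreases when `W` is adjoined to `Z`:
`−M̂(⟨⟨X, Z⟩, W⟩; Y) + β · M̂(⟨Z, W⟩; X) < −M̂(⟨X, Z⟩; Y) + β · M̂(Z; X)`. -/


theorem bottleneck_objective_lt {Ω S T U V : Type*} [MeasurableSpace Ω]
    [MeasurableSpace S] [Fintype S] [MeasurableSingletonClass S]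
    [MeasurableSpace T] [Fintype T] [MeasurableSingletonClass T]
    [MeasurableSpace U] [Fintype U] [MeasurableSingletonClass U]
    [MeasurableSpace V] [Fintype V] [MeasurableSingletonClass V]
    (μ : Measure Ω) [IsProbabilityMeasure μ]
    (X : Ω → S) (Y : Ω → T) (Z : Ω → U) (W : Ω → V) (g : T → V)
    (hX : Measurable X) (hY : Measurable Y) (hZ : Measurable Z) (hW : Measurable W)
    (hg : Measurable g)
    (ha : W = g ∘ Y)
    (hb : 0 < condMutualInfo μ W Y (pairRV X Z))
    (hc : IndepFun W (pairRV X Z) μ)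
    (hd : 0 < shannonEntropy μ W)
    (he : 0 < mutualInfo μ Z X) :
    ∀ β : ℝ, 0 < β →
      -relMutualInfo μ (pairRV (pairRV X Z) W) Y + β * relMutualInfo μ (pairRV Z W) X
        < -relMutualInfo μ (pairRV X Z) Y + β * relMutualInfo μ Z X := by

  classical
  intro β hβ
  have hXZ : Measurable (pairRV X Z) := hX.prodMk hZ
  set HW := shannonEntropy μ W with hHWdef
  set D := shannonEntropy μ (pairRV (pairRV X Z) Y) with hDdef
  set E := shannonEntropy μ (pairRV Z X) with hEdef
  -- h1 : entropy of ((X,Z),W),Y) equals D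
  have h1 : shannonEntropy μ (pairRV (pairRV (pairRV X Z) W) Y) = D := by
    have hf : Function.Injective (fun p : (S × U) × T => ((p.1, g p.2), p.2)) := by
      intro p q h
      simp only [Prod.ext_iff] at h ⊢
      exact ⟨h.1.1, h.2⟩
    have hcomp : (fun p : (S × U) × T => ((p.1, g p.2), p.2)) ∘ pairRV (pairRV X Z) Y
        = pairRV (pairRV (pairRV X Z) W) Y := by
      funext ω; simp [pairRV, ha]
    rw [hDdef, ← hcomp]
    exact shannonEntropy_comp_of_injective μ _ _ hf
  -- h2 : entropy of ((X,Z),W) splits by independence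
  have h2 : shannonEntropy μ (pairRV (pairRV X Z) W) = shannonEntropy μ (pairRV X Z) + HW :=
    shannonEntropy_pair_of_indep μ _ _ hXZ hW hc.symm
  -- swap : H[(X,Z)] = H[(Z,X)] = E
  have hswap : shannonEntropy μ (pairRV X Z) = E := by
    have hf : Function.Injective (Prod.swap : U × S → S × U) := Prod.swap_injective
    have hcomp : (Prod.swap : U × S → S × U) ∘ pairRV Z X = pairRV X Z := by
      funext ω; simp [pairRV]
    rw [hEdef, ← hcomp]
    exact shannonEntropy_comp_of_injective μ _ _ hf
  -- h4 : H[((Z,W),X)] = E + HW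
  have h4 : shannonEntropy μ (pairRV (pairRV Z W) X) = E + HW := by
    have hf : Function.Injective (fun p : (S × U) × V => ((p.1.2, p.2), p.1.1)) := by
      intro p q h
      simp only [Prod.ext_iff] at h ⊢
      exact ⟨⟨h.2, h.1.1⟩, h.1.2⟩
    have hcomp : (fun p : (S × U) × V => ((p.1.2, p.2), p.1.1)) ∘ pairRV (pairRV X Z) W
        = pairRV (pairRV Z W) X := by
      funext ω; simp [pairRV]
    rw [← hcomp, shannonEntropy_comp_of_injective μ _ _ hf, h2, hswap]
  -- h5 : H[(Z,W)] = H[Z] + HW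
  have hZW : IndepFun Z W μ := by
    have := hc.symm.comp (measurable_snd : Measurable (Prod.snd : S × U → U)) measurable_id
    exact this
  have h5 : shannonEntropy μ (pairRV Z W) = shannonEntropy μ Z + HW :=
    shannonEntropy_pair_of_indep μ _ _ hZ hW hZW
  -- positivity of denominators
  have hWY : HW ≤ shannonEntropy μ Y := by
    rw [hHWdef, ha]; exact shannonEntropy_comp_le μ Y hY g
  have hYD : shannonEntropy μ Y ≤ D := by
    have hcomp : (Prod.snd : (S × U) × T → T) ∘ pairRV (pairRV X Z) Y = Y := rfl
    have := shannonEntropy_comp_le μ (pairRV (pairRV X Z) Y) (hXZ.prodMk hY)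
      (Prod.snd : (S × U) × T → T)
    rwa [hcomp] at this
  have hD : 0 < D := lt_of_lt_of_le hd (hWY.trans hYD)
  have hZE : shannonEntropy μ Z ≤ E := by
    have hcomp : (Prod.fst : U × S → U) ∘ pairRV Z X = Z := rfl
    have := shannonEntropy_comp_le μ (pairRV Z X) (hZ.prodMk hX) (Prod.fst : U × S → U)
    rwa [hcomp] at this
  have hXE : shannonEntropy μ X ≤ E := by
    have hcomp : (Prod.snd : U × S → S) ∘ pairRV Z X = X := rfl
    have := shannonEntropy_comp_le μ (pairRV Z X) (hZ.prodMk hX) (Prod.snd : U × S → S)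
    rwa [hcomp] at this
  have hIZ : mutualInfo μ Z X ≤ shannonEntropy μ Z := by
    unfold mutualInfo; rw [← hEdef]; linarith
  have hE : 0 < E := lt_of_lt_of_le he (hIZ.trans hZE)
  -- rewrite the four relative mutual informations
  have r1 : relMutualInfo μ (pairRV (pairRV X Z) W) Y
      = (mutualInfo μ (pairRV X Z) Y + HW) / D := by
    unfold relMutualInfo mutualInfo
    rw [h1, h2, ← hDdef]; ring_nf
  have r2 : relMutualInfo μ (pairRV X Z) Y = mutualInfo μ (pairRV X Z) Y / D := by
    unfold relMutualInfo; rw [← hDdef]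
  have r3 : relMutualInfo μ (pairRV Z W) X = mutualInfo μ Z X / (E + HW) := by
    unfold relMutualInfo mutualInfo
    rw [h5, h4, ← hEdef]; ring_nf
  have r4 : relMutualInfo μ Z X = mutualInfo μ Z X / E := by
    unfold relMutualInfo; rw [← hEdef]
  rw [r1, r2, r3, r4]
  have t1 : mutualInfo μ (pairRV X Z) Y / D < (mutualInfo μ (pairRV X Z) Y + HW) / D :=
    (div_lt_div_iff_of_pos_right hD).mpr (by linarith)
  have t2 : mutualInfo μ Z X / (E + HW) < mutualInfo μ Z X / E :=
    div_lt_div_of_pos_left he hE (by linarith)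
  have t2b := mul_lt_mul_of_pos_left t2 hβ
  linarith
end

section
/- Let X, Y, Z, W be random variables on a probability space taking values in finite measurable spaces. Suppose W = g ∘ X for some measurable function g and I[W : X | Z] > 0. Then for every β > 0, the information-bottleneck objective strictly increases when W is adjoined to Z: −M̂(⟨⟨X, Z⟩, W⟩; Y) + β · M̂(⟨Z, W⟩; X) > −M̂(⟨X, Z⟩; Y) + β · M̂(Z; X). (The strict inequality ℓ(z̈₃, z₄) > ℓ(z₃, z₄) established in the proof of Proposition D.2, showing that the optimal bottleneck encoding must exclude information that is redundant with the view and task-irrelevant.) -/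
open MeasureTheory ProbabilityTheory

lemma negMulLog_finset_sum_le {ι : Type*} (s : Finset ι) (f : ι → ℝ) (hf : ∀ i ∈ s, 0 ≤ f i) :
    Real.negMulLog (∑ i ∈ s, f i) ≤ ∑ i ∈ s, Real.negMulLog (f i) := by
  have key : Real.negMulLog (∑ i ∈ s, f i) = ∑ i ∈ s, (-(f i) * Real.log (∑ j ∈ s, f j)) := by
    simp only [Real.negMulLog, neg_mul, ← Finset.sum_neg_distrib, ← Finset.sum_mul, Finset.sum_mul]
  rw [key]
  apply Finset.sum_le_sum
  intro i hi
  rcases eq_or_lt_of_le (hf i hi) with h0 | h0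
  · simp [← h0, Real.negMulLog]
  · rw [Real.negMulLog]
    have : Real.log (f i) ≤ Real.log (∑ j ∈ s, f j) := by
      apply Real.log_le_log h0
      exact Finset.single_le_sum hf hi
    nlinarith

lemma shannonEntropy_comp_injective {Ω S V : Type*} [MeasurableSpace Ω] [MeasurableSpace S]
    [Fintype S] [MeasurableSpace V] [Fintype V]
    (μ : Measure Ω) (A : Ω → S) (f : S → V) (hf : Function.Injective f) :
    shannonEntropy μ (f ∘ A) = shannonEntropy μ A := by
  classical
  unfold shannonEntropy
  rw [← Finset.sum_subset (Finset.subset_univ (Finset.univ.image f))]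
  · rw [Finset.sum_image (fun a _ b _ h => hf h)]
    apply Finset.sum_congr rfl
    intro s _
    congr 1
    have : (f ∘ A) ⁻¹' {f s} = A ⁻¹' {s} := by
      ext ω; simp [hf.eq_iff]
    rw [this]
  · intro v _ hv
    have : (f ∘ A) ⁻¹' {v} = ∅ := by
      ext ω
      simp only [Set.mem_preimage, Function.comp_apply, Set.mem_singleton_iff, Set.mem_empty_iff_false, iff_false]
      intro h
      exact hv (Finset.mem_image.mpr ⟨A ω, Finset.mem_univ _, h⟩)
    simp [this, Real.negMulLog]

lemma shannonEntropy_nonneg {Ω S : Type*} [MeasurableSpace Ω] [MeasurableSpace S]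
    [Fintype S] (μ : Measure Ω) [IsProbabilityMeasure μ] (A : Ω → S) :
    0 ≤ shannonEntropy μ A := by
  apply Finset.sum_nonneg
  intro s _
  apply Real.negMulLog_nonneg ENNReal.toReal_nonneg
  exact ENNReal.toReal_le_of_le_ofReal one_pos.le (by simpa using prob_le_one)

lemma shannonEntropy_comp_le_s8 {Ω S V : Type*} [MeasurableSpace Ω] [MeasurableSpace S]
    [Fintype S] [MeasurableSingletonClass S] [MeasurableSpace V] [Fintype V]
    (μ : Measure Ω) [IsProbabilityMeasure μ] (A : Ω → S) (hA : Measurable A) (f : S → V) :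
    shannonEntropy μ (f ∘ A) ≤ shannonEntropy μ A := by
  classical
  unfold shannonEntropy
  rw [← Finset.sum_fiberwise Finset.univ f (fun s => Real.negMulLog ((μ (A ⁻¹' {s})).toReal))]
  apply Finset.sum_le_sum
  intro v _
  have hpre : (f ∘ A) ⁻¹' {v} = ⋃ s ∈ Finset.univ.filter (fun s => f s = v), A ⁻¹' {s} := by
    ext ω; simp
  have hmeas : (μ ((f ∘ A) ⁻¹' {v})).toReal
      = ∑ s ∈ Finset.univ.filter (fun s => f s = v), (μ (A ⁻¹' {s})).toReal := by
    rw [hpre, measure_biUnion_finset ?_ (fun s _ => hA (measurableSet_singleton s))]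
    · rw [ENNReal.toReal_sum]
      intro s _
      exact (measure_lt_top μ _).ne
    · intro a _ b _ hab
      apply Set.disjoint_left.mpr
      intro ω ha hb
      exact hab (by simp_all)
  rw [hmeas]
  exact negMulLog_finset_sum_le _ _ (fun i _ => ENNReal.toReal_nonneg)

/-- If `W = g ∘ X` and `I[W : X | Z] > 0`, then for every `β > 0` the
information-bottleneck objective strictly increases when `W` is adjoined to `Z`:
`−M̂(⟨⟨X, Z⟩, W⟩; Y) + β · M̂(⟨Z, W⟩; X) > −M̂(⟨X, Z⟩; Y) + β · M̂(Z; X)`. -/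
theorem bottleneck_objective_gt {Ω S T U V : Type*} [MeasurableSpace Ω]
    [MeasurableSpace S] [Fintype S] [MeasurableSingletonClass S]
    [MeasurableSpace T] [Fintype T] [MeasurableSingletonClass T]
    [MeasurableSpace U] [Fintype U] [MeasurableSingletonClass U]
    [MeasurableSpace V] [Fintype V] [MeasurableSingletonClass V]
    (μ : Measure Ω) [IsProbabilityMeasure μ]
    (X : Ω → S) (Y : Ω → T) (Z : Ω → U) (W : Ω → V) (g : S → V)
    (hX : Measurable X) (hY : Measurable Y) (hZ : Measurable Z) (hW : Measurable W)
    (hg : Measurable g)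
    (hcomp : W = g ∘ X)
    (hpos : 0 < condMutualInfo μ W X Z) :
    ∀ β : ℝ, 0 < β →
      -relMutualInfo μ (pairRV X Z) Y + β * relMutualInfo μ Z X
        < -relMutualInfo μ (pairRV (pairRV X Z) W) Y + β * relMutualInfo μ (pairRV Z W) X := by
  intro β hβ
  -- entropy equalities via injective recodings
  have e1 : shannonEntropy μ (pairRV (pairRV X Z) W) = shannonEntropy μ (pairRV X Z) := by
    have hfun : pairRV (pairRV X Z) W
        = (fun p : S × U => (p, g p.1)) ∘ pairRV X Z := by
      funext ω; simp [pairRV, hcomp]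
    rw [hfun]
    exact shannonEntropy_comp_injective μ _ _ (fun a b h => by simpa using congrArg Prod.fst h)
  have e2 : shannonEntropy μ (pairRV (pairRV (pairRV X Z) W) Y)
      = shannonEntropy μ (pairRV (pairRV X Z) Y) := by
    have hfun : pairRV (pairRV (pairRV X Z) W) Y
        = (fun p : (S × U) × T => ((p.1, g p.1.1), p.2)) ∘ pairRV (pairRV X Z) Y := by
      funext ω; simp [pairRV, hcomp]
    rw [hfun]
    apply shannonEntropy_comp_injective
    intro a b h
    simp only [Prod.mk.injEq] at h
    exact Prod.ext h.1.1 h.2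
  have e3 : shannonEntropy μ (pairRV (pairRV Z W) X) = shannonEntropy μ (pairRV Z X) := by
    have hfun : pairRV (pairRV Z W) X
        = (fun p : U × S => ((p.1, g p.2), p.2)) ∘ pairRV Z X := by
      funext ω; simp [pairRV, hcomp]
    rw [hfun]
    apply shannonEntropy_comp_injective
    intro a b h
    simp only [Prod.mk.injEq] at h
    exact Prod.ext h.1.1 h.2
  have e4 : shannonEntropy μ (pairRV (pairRV W X) Z) = shannonEntropy μ (pairRV X Z) := by
    have hfun : pairRV (pairRV W X) Z
        = (fun p : S × U => ((g p.1, p.1), p.2)) ∘ pairRV X Z := by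
      funext ω; simp [pairRV, hcomp]
    rw [hfun]
    apply shannonEntropy_comp_injective
    intro a b h
    simp only [Prod.mk.injEq] at h
    exact Prod.ext h.1.2 h.2
  have e5 : shannonEntropy μ (pairRV Z W) = shannonEntropy μ (pairRV W Z) := by
    have hfun : pairRV Z W = Prod.swap ∘ pairRV W Z := by
      funext ω; simp [pairRV]
    rw [hfun]
    exact shannonEntropy_comp_injective μ _ _ Prod.swap_injective
  have e6 : shannonEntropy μ (pairRV W Z) ≤ shannonEntropy μ (pairRV Z X) := by
    have hfun : pairRV W Z = (fun p : U × S => (g p.2, p.1)) ∘ pairRV Z X := by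
      funext ω; simp [pairRV, hcomp]
    rw [hfun]
    exact shannonEntropy_comp_le_s8 μ _ (hZ.prodMk hX) _
  -- hpos says H[W,Z] > H[Z]
  have hWZ : shannonEntropy μ Z < shannonEntropy μ (pairRV W Z) := by
    unfold condMutualInfo at hpos
    rw [e4] at hpos
    linarith
  have hZnn : 0 ≤ shannonEntropy μ Z := shannonEntropy_nonneg μ Z
  have hD : 0 < shannonEntropy μ (pairRV Z X) := lt_of_lt_of_le (lt_of_le_of_lt hZnn hWZ) e6
  -- first terms are equal
  have relA : relMutualInfo μ (pairRV (pairRV X Z) W) Y = relMutualInfo μ (pairRV X Z) Y := by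
    unfold relMutualInfo mutualInfo
    rw [e1, e2]
  -- second terms strictly increase
  have relB : relMutualInfo μ Z X < relMutualInfo μ (pairRV Z W) X := by
    unfold relMutualInfo mutualInfo
    rw [e3, e5]
    exact (div_lt_div_iff_of_pos_right hD).mpr (by linarith)
  rw [relA]
  linarith [mul_lt_mul_of_pos_left relB hβ]
end
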